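/- Let k : X × X → ℝ be a positive definite kernel on a nonempty set X with k(x,y) > 0 for all x,y ∈ X. Then the following conditions are equivalent: (i) k is infinitely divisible, i.e., for every n ≥ 1 there exists a nonnegative positive definite kernel kₙ with kₙⁿ = k pointwise; (ii) the function (x,y) ↦ −log k(x,y) is a negative definite kernel on X; (iii) for every real t > 0, the pointwise power (x,y) ↦ k(x,y)^t is a positive definite kernel on X. -/

import Mathlib

/-- A symmetric function `k : X × X → ℝ` is a positive definite kernel on `X` if
`∑ᵢⱼ cᵢ cⱼ k(xᵢ,xⱼ) ≥ 0` for all finite families of points and real coefficients. -/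
def IsPosDefKernel {X : Type*} (k : X → X → ℝ) : Prop :=
  (∀ x y, k x y = k y x) ∧
  ∀ (n : ℕ) (x : Fin n → X) (c : Fin n → ℝ),
    0 ≤ ∑ i, ∑ j, c i * c j * k (x i) (x j)
/-- A symmetric function `ψ : X × X → ℝ` is a negative definite kernel on `X` if
`∑ᵢⱼ cᵢ cⱼ ψ(xᵢ,xⱼ) ≤ 0` for all finite families of points and real coefficients
summing to zero. -/
def IsNegDefKernel {X : Type*} (ψ : X → X → ℝ) : Prop :=
  (∀ x y, ψ x y = ψ y x) ∧
  ∀ (n : ℕ) (x : Fin n → X) (c : Fin n → ℝ), (∑ i, c i) = 0 →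
    ∑ i, ∑ j, c i * c j * ψ (x i) (x j) ≤ 0

/-!
(iii) ⇒ (i): take kₙ = k^{1/n}. (i) ⇒ (ii): the root kₙ is necessarily k^{1/n}, so
N (1 - k^{1/N}) is negative definite, and it tends to -log k pointwise.
(ii) ⇒ (iii) is Schoenberg's theorem: for ψ negative definite and a basepoint x₀,
ψ(x,x₀) + ψ(y,x₀) - ψ(x,y) - ψ(x₀,x₀) is positive definite, hence so is its exponential
(a limit of polynomials in it, by Schur's product theorem), and exp(-ψ) differs from that
exponential by a factor g(x) g(y).
-/

open Filter Topology

section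

variable {X : Type*}

open Matrix in
theorem isPosDefKernel_iff_posSemidef {k : X → X → ℝ} :
    IsPosDefKernel k ↔ ∀ (n : ℕ) (x : Fin n → X), (of fun i j => k (x i) (x j)).PosSemidef := by
  have quad : ∀ (n : ℕ) (x : Fin n → X) (c : Fin n → ℝ),
      star c ⬝ᵥ (of fun i j => k (x i) (x j)) *ᵥ c = ∑ i, ∑ j, c i * c j * k (x i) (x j) := by
    intro n x c
    simp only [dotProduct, mulVec, of_apply, star_trivial, Finset.mul_sum]
    exact Finset.sum_congr rfl fun i _ => Finset.sum_congr rfl fun j _ => by ring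
  refine ⟨fun hk n x => PosSemidef.of_dotProduct_mulVec_nonneg ?_ fun c => ?_,
    fun h => ⟨fun a b => ?_, fun n x c => ?_⟩⟩
  · ext i j
    exact hk.1 (x j) (x i)
  · rw [quad]; exact hk.2 n x c
  · simpa using ((h 2 ![a, b]).isHermitian.apply 0 1).symm
  · rw [← quad]; exact (h n x).dotProduct_mulVec_nonneg c

theorem isPosDefKernel_mul_self (g : X → ℝ) : IsPosDefKernel fun x y => g x * g y := by
  refine ⟨fun x y => mul_comm _ _, fun n x c => ?_⟩
  have : ∑ i, ∑ j, c i * c j * (g (x i) * g (x j)) = (∑ i, c i * g (x i)) ^ 2 := by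
    rw [sq, Finset.sum_mul_sum]
    exact Finset.sum_congr rfl fun i _ => Finset.sum_congr rfl fun j _ => by ring
  rw [this]
  positivity

namespace IsPosDefKernel

theorem of_isEmpty [IsEmpty X] (k : X → X → ℝ) : IsPosDefKernel k := by
  refine ⟨fun x => isEmptyElim x, fun n x c => ?_⟩
  rcases n with _ | n
  · simp
  · exact isEmptyElim (x 0)

theorem mul {k l : X → X → ℝ} (hk : IsPosDefKernel k) (hl : IsPosDefKernel l) :
    IsPosDefKernel fun x y => k x y * l x y :=
  isPosDefKernel_iff_posSemidef.2 fun n x =>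
    (isPosDefKernel_iff_posSemidef.1 hk n x).hadamard (isPosDefKernel_iff_posSemidef.1 hl n x)

theorem const_mul {k : X → X → ℝ} (hk : IsPosDefKernel k) {a : ℝ} (ha : 0 ≤ a) :
    IsPosDefKernel fun x y => a * k x y := by
  refine ⟨fun x y => by simp only [hk.1 x y], fun n x c => ?_⟩
  have : ∑ i, ∑ j, c i * c j * (a * k (x i) (x j))
      = a * ∑ i, ∑ j, c i * c j * k (x i) (x j) := by
    simp only [Finset.mul_sum]
    exact Finset.sum_congr rfl fun i _ => Finset.sum_congr rfl fun j _ => by ring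
  rw [this]
  exact mul_nonneg ha (hk.2 n x c)

theorem add {k l : X → X → ℝ} (hk : IsPosDefKernel k) (hl : IsPosDefKernel l) :
    IsPosDefKernel fun x y => k x y + l x y := by
  refine ⟨fun x y => by simp only [hk.1 x y, hl.1 x y], fun n x c => ?_⟩
  simp only [mul_add, Finset.sum_add_distrib]
  exact add_nonneg (hk.2 n x c) (hl.2 n x c)

theorem pow {k : X → X → ℝ} (hk : IsPosDefKernel k) (m : ℕ) :
    IsPosDefKernel fun x y => k x y ^ m := by
  induction m with
  | zero => simpa using isPosDefKernel_mul_self (fun _ : X => (1 : ℝ))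
  | succ m ih => simpa only [pow_succ] using ih.mul hk

theorem of_tendsto {ι : Type*} {l : Filter ι} [l.NeBot] {K : ι → X → X → ℝ} {k : X → X → ℝ}
    (hK : ∀ᶠ i in l, IsPosDefKernel (K i))
    (hlim : ∀ x y, Tendsto (fun i => K i x y) l (𝓝 (k x y))) :
    IsPosDefKernel k := by
  refine ⟨fun x y => tendsto_nhds_unique ((hlim x y).congr' ?_) (hlim y x), fun n x c => ?_⟩
  · filter_upwards [hK] with i hi using hi.1 x y
  · refine ge_of_tendsto ?_ (hK.mono fun i hi => hi.2 n x c)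
    exact tendsto_finsetSum _ fun i _ => tendsto_finsetSum _ fun j _ =>
      (hlim (x i) (x j)).const_mul _

theorem exp {k : X → X → ℝ} (hk : IsPosDefKernel k) :
    IsPosDefKernel fun x y => Real.exp (k x y) := by
  refine of_tendsto (K := fun (m : ℕ) x y => (1 + k x y / m) ^ m) (l := atTop)
    (.of_forall fun m => ?_) fun x y => Real.tendsto_one_add_div_pow_exp (k x y)
  have h := ((isPosDefKernel_mul_self fun _ : X => (1 : ℝ)).add
    (hk.const_mul (inv_nonneg.2 (Nat.cast_nonneg m)))).pow m
  simpa only [one_mul, div_eq_inv_mul] using h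

theorem isNegDefKernel_neg {k : X → X → ℝ} (hk : IsPosDefKernel k) :
    IsNegDefKernel fun x y => -k x y := by
  refine ⟨fun x y => by simp only [hk.1 x y], fun n x c _ => ?_⟩
  simpa only [mul_neg, Finset.sum_neg_distrib, neg_nonpos] using hk.2 n x c

end IsPosDefKernel

namespace IsNegDefKernel

theorem add_apply_add {ψ : X → X → ℝ} (hψ : IsNegDefKernel ψ) (f : X → ℝ) :
    IsNegDefKernel fun x y => ψ x y + (f x + f y) := by
  refine ⟨fun x y => by simp only [hψ.1 x y, add_comm (f x)], fun n x c hc => ?_⟩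
  have : ∑ i, ∑ j, c i * c j * (ψ (x i) (x j) + (f (x i) + f (x j)))
      = ∑ i, ∑ j, c i * c j * ψ (x i) (x j)
        + ((∑ i, c i * f (x i)) * ∑ j, c j + (∑ i, c i) * ∑ j, c j * f (x j)) := by
    simp only [Finset.sum_mul_sum, ← Finset.sum_add_distrib]
    exact Finset.sum_congr rfl fun i _ => Finset.sum_congr rfl fun j _ => by ring
  rw [this, hc, mul_zero, zero_mul, add_zero, add_zero]
  exact hψ.2 n x c hc

theorem const_mul {ψ : X → X → ℝ} (hψ : IsNegDefKernel ψ) {a : ℝ} (ha : 0 ≤ a) :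
    IsNegDefKernel fun x y => a * ψ x y := by
  refine ⟨fun x y => by simp only [hψ.1 x y], fun n x c hc => ?_⟩
  have : ∑ i, ∑ j, c i * c j * (a * ψ (x i) (x j))
      = a * ∑ i, ∑ j, c i * c j * ψ (x i) (x j) := by
    simp only [Finset.mul_sum]
    exact Finset.sum_congr rfl fun i _ => Finset.sum_congr rfl fun j _ => by ring
  rw [this]
  exact mul_nonpos_of_nonneg_of_nonpos ha (hψ.2 n x c hc)

theorem of_tendsto {ι : Type*} {l : Filter ι} [l.NeBot] {K : ι → X → X → ℝ} {ψ : X → X → ℝ}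
    (hK : ∀ᶠ i in l, IsNegDefKernel (K i))
    (hlim : ∀ x y, Tendsto (fun i => K i x y) l (𝓝 (ψ x y))) :
    IsNegDefKernel ψ := by
  refine ⟨fun x y => tendsto_nhds_unique ((hlim x y).congr' ?_) (hlim y x), fun n x c hc => ?_⟩
  · filter_upwards [hK] with i hi using hi.1 x y
  · refine le_of_tendsto ?_ (hK.mono fun i hi => hi.2 n x c hc)
    exact tendsto_finsetSum _ fun i _ => tendsto_finsetSum _ fun j _ =>
      (hlim (x i) (x j)).const_mul _

theorem isPosDefKernel_basepoint {ψ : X → X → ℝ} (hψ : IsNegDefKernel ψ) (x₀ : X) :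
    IsPosDefKernel fun x y => ψ x x₀ + ψ y x₀ - ψ x y - ψ x₀ x₀ := by
  set φ := fun x y => ψ x x₀ + ψ y x₀ - ψ x y - ψ x₀ x₀
  refine ⟨fun x y => by simp only [φ, hψ.1 x y]; ring, fun n x c => ?_⟩
  have hφ₀ : ∀ y, φ x₀ y = 0 ∧ φ y x₀ = 0 := fun y => by
    constructor <;> simp only [φ, hψ.1 x₀ y] <;> ring
  have hneg : IsNegDefKernel fun x y => -φ x y := by
    convert hψ.add_apply_add (fun x => ψ x₀ x₀ / 2 - ψ x x₀) using 3
    simp only [φ]; ring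
  -- `φ` vanishes at `x₀`, so prepending `x₀` with weight `-∑ cᵢ` (making the weights sum to zero)
  -- does not change its quadratic form.
  have h := hneg.2 (n + 1) (Fin.cons x₀ x) (Fin.cons (-∑ i, c i) c)
    (by simp [Fin.sum_univ_succ])
  simpa [Fin.sum_univ_succ, hφ₀] using h

theorem isPosDefKernel_exp_neg {ψ : X → X → ℝ} (hψ : IsNegDefKernel ψ) :
    IsPosDefKernel fun x y => Real.exp (-ψ x y) := by
  rcases isEmpty_or_nonempty X with _ | ⟨⟨x₀⟩⟩
  · exact .of_isEmpty _
  have h := (hψ.isPosDefKernel_basepoint x₀).exp.mul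
    (isPosDefKernel_mul_self fun x => Real.exp (ψ x₀ x₀ / 2 - ψ x x₀))
  convert h using 3 with x y
  rw [← Real.exp_add, ← Real.exp_add]
  ring_nf

end IsNegDefKernel

theorem isNegDefKernel_neg_log {k : X → X → ℝ} (hpos : ∀ x y, 0 < k x y)
    (hk : ∀ N : ℕ, 1 ≤ N → IsPosDefKernel fun x y => k x y ^ (N⁻¹ : ℝ)) :
    IsNegDefKernel fun x y => -Real.log (k x y) := by
  refine IsNegDefKernel.of_tendsto (K := fun (N : ℕ) x y => N * (1 - k x y ^ (N⁻¹ : ℝ)))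
    (l := atTop) ?_ fun x y => ?_
  · filter_upwards [eventually_ge_atTop 1] with N hN
    convert ((hk N hN).const_mul (Nat.cast_nonneg N)).isNegDefKernel_neg.add_apply_add
      (fun _ => (N : ℝ) / 2) using 3
    ring
  · have hinv : Tendsto (fun N : ℕ => (N⁻¹ : ℝ)) atTop (𝓝[>] 0) :=
      tendsto_inv_atTop_nhdsGT_zero.comp tendsto_natCast_atTop_atTop
    refine ((tendsto_rpow_sub_one_log (hpos x y)).comp hinv).neg.congr fun N => ?_
    simp only [Function.comp_apply, inv_inv]
    ring

end

theorem infinitely_divisible_tfae_general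
    {X : Type*} (k : X → X → ℝ) (hpos : ∀ x y, 0 < k x y) :
    List.TFAE [
      -- (i) k is infinitely divisible
      ∀ n : ℕ, 1 ≤ n → ∃ kn : X → X → ℝ,
        (∀ x y, 0 ≤ kn x y) ∧ IsPosDefKernel kn ∧ ∀ x y, (kn x y) ^ n = k x y,
      -- (ii) -log k is a negative definite kernel
      IsNegDefKernel (fun x y => - Real.log (k x y)),
      -- (iii) every positive real power of k is positive definite
      ∀ t : ℝ, 0 < t → IsPosDefKernel (fun x y => (k x y) ^ t)] := by
  tfae_have 1 → 2 := by
    refine fun h => isNegDefKernel_neg_log hpos fun N hN => ?_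
    obtain ⟨kN, hnonneg, hkN, hpow⟩ := h N hN
    convert hkN using 3 with x y
    rw [← hpow, Real.pow_rpow_inv_natCast (hnonneg x y) (by omega)]
  tfae_have 2 → 3 := by
    intro h t ht
    convert (h.const_mul ht.le).isPosDefKernel_exp_neg using 3 with x y
    rw [Real.rpow_def_of_pos (hpos x y), mul_neg, neg_neg, mul_comm]
  tfae_have 3 → 1 := fun h n hn =>
    ⟨fun x y => k x y ^ (n⁻¹ : ℝ), fun x y => Real.rpow_nonneg (hpos x y).le _,
      h _ (by positivity), fun x y => Real.rpow_inv_natCast_pow (hpos x y).le (by omega)⟩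
  tfae_finish

theorem infinitely_divisible_tfae
    {X : Type*} [Nonempty X] (k : X → X → ℝ)
    (hk : IsPosDefKernel k) (hpos : ∀ x y, 0 < k x y) :
    List.TFAE [
      -- (i) k is infinitely divisible
      ∀ n : ℕ, 1 ≤ n → ∃ kn : X → X → ℝ,
        (∀ x y, 0 ≤ kn x y) ∧ IsPosDefKernel kn ∧ ∀ x y, (kn x y) ^ n = k x y,
      -- (ii) -log k is a negative definite kernel
      IsNegDefKernel (fun x y => - Real.log (k x y)),
      -- (iii) every positive real power of k is positive definite
      ∀ t : ℝ, 0 < t → IsPosDefKernel (fun x y => (k x y) ^ t)] :=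
  infinitely_divisible_tfae_general k hpos
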